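/- Let N ≥ 1 and let H_N be either the N×N Bessel Hessenberg matrix or the N×N modified Bessel Hessenberg matrix, and let K_N(H_N,e_1) = [e_1, H_N e_1, …, H_N^{N−1} e_1] be the (invertible) Krylov matrix. Then for every integer k ≥ N, ‖K_N(H_N,e_1)^{−1} H_N^{k} e_1‖ ≤ 2 √N (1 + √2)^N. -/

import Mathlib

/-!
Both matrices are `tridiagH N σ` with `σ = ∓1`. Its columns satisfy `H e₀ = e₁ / 2` and
`2 H e_{j+1} = c_j σ e_j + e_{j+2}` with `c₀ = 2` and `c_j = 1` otherwise, so
`e_j = q_j(H) e₁ / c_j` for the polynomials `q₀ = 2`, `q₁ = 2X`, `q_{j+2} = 2X q_{j+1} - σ q_j`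
(the Dickson polynomials `D_j(2X, σ)`). Hence the `j`-th column of the inverse Krylov matrix
holds the coefficients of `q_j / c_j`, and these are at most `2 (1 + √2)^j` in absolute value
because `r = 1 + √2` solves `r² = 2r + 1`. The absolute row sums of `H` are at most `1`, so
every entry of `H^k e₁` lies in `[-1, 1]`. Each entry of `K⁻¹ H^k e₁` is then bounded by
`2 ∑_{j<N} r^j ≤ 2 r^N`, and `‖x‖ ≤ √N max |x_i|`.
-/

/-- The Bessel Hessenberg matrix: `(H_N)_{1,2} = -1`, subdiagonal entries `1/2`,
superdiagonal entries `-1/2` (for rows `2 ≤ i ≤ N`), all indices here 1-based. -/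
noncomputable def besselH (N : ℕ) : Matrix (Fin N) (Fin N) ℝ := fun i j =>
  if (i : ℕ) = 0 ∧ (j : ℕ) = 1 then -1
  else if (j : ℕ) + 1 = (i : ℕ) then 1/2
  else if (i : ℕ) + 1 = (j : ℕ) ∧ 1 ≤ (i : ℕ) then -(1/2)
  else 0

/-- The modified Bessel Hessenberg matrix: `(H_N)_{1,2} = 1`, subdiagonal entries `1/2`,
superdiagonal entries `1/2` (for rows `2 ≤ i ≤ N`), all indices here 1-based. -/
noncomputable def modBesselH (N : ℕ) : Matrix (Fin N) (Fin N) ℝ := fun i j =>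
  if (i : ℕ) = 0 ∧ (j : ℕ) = 1 then 1
  else if (j : ℕ) + 1 = (i : ℕ) then 1/2
  else if (i : ℕ) + 1 = (j : ℕ) ∧ 1 ≤ (i : ℕ) then 1/2
  else 0

/-- The first standard basis vector of `ℝ^N`. -/
noncomputable def e1 (N : ℕ) : Fin N → ℝ := fun j => if (j : ℕ) = 0 then 1 else 0

/-- The Krylov matrix `K_N(H, e₁) = [e₁, H e₁, …, H^(N-1) e₁]`. -/
noncomputable def krylov {N : ℕ} (H : Matrix (Fin N) (Fin N) ℝ) : Matrix (Fin N) (Fin N) ℝ :=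
  fun i j => (H ^ (j : ℕ)).mulVec (e1 N) i

/-- The Euclidean norm of a vector in `ℝ^N`. -/
noncomputable def enorm' {N : ℕ} (v : Fin N → ℝ) : ℝ :=
  ‖(WithLp.equiv 2 (Fin N → ℝ)).symm v‖

open Matrix Finset Polynomial

noncomputable def tridiagH (N : ℕ) (σ : ℝ) : Matrix (Fin N) (Fin N) ℝ := fun i j =>
  if (i : ℕ) = 0 ∧ (j : ℕ) = 1 then σ
  else if (j : ℕ) + 1 = (i : ℕ) then 1/2
  else if (i : ℕ) + 1 = (j : ℕ) ∧ 1 ≤ (i : ℕ) then σ/2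
  else 0

theorem besselH_eq_tridiagH (N : ℕ) : besselH N = tridiagH N (-1) := by
  ext i j
  simp only [besselH, tridiagH]
  norm_num

theorem modBesselH_eq_tridiagH (N : ℕ) : modBesselH N = tridiagH N 1 := rfl

-- Indexed by `ℕ`, so that `unitVec N N = 0` absorbs the missing entry of the last column of `H`.
def unitVec (N j : ℕ) : Fin N → ℝ := fun i => if (i : ℕ) = j then 1 else 0

theorem sum_ite_val_eq_le {N : ℕ} (n : ℕ) {a : ℝ} (ha : 0 ≤ a) :
    ∑ j : Fin N, (if (j : ℕ) = n then a else 0) ≤ a := by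
  rw [Fin.sum_univ_eq_sum_range (fun j => if j = n then a else 0), sum_ite_eq']
  split_ifs <;> linarith

theorem abs_tridiagH_le {N : ℕ} {σ : ℝ} (hσ : |σ| ≤ 1) (i j : Fin N) :
    |tridiagH N σ i j| ≤ (if (i : ℕ) = 0 then 0 else if (j : ℕ) = i - 1 then 1/2 else 0)
      + (if (j : ℕ) = i + 1 then (if (i : ℕ) = 0 then 1 else 1/2) else 0) := by
  unfold tridiagH
  have hσ₀ := abs_nonneg σ
  split_ifs <;> first | omega | norm_num [abs_div] <;> linarith

theorem sum_abs_tridiagH_le {N : ℕ} {σ : ℝ} (hσ : |σ| ≤ 1) (i : Fin N) :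
    ∑ j, |tridiagH N σ i j| ≤ 1 := by
  refine (sum_le_sum fun j _ => abs_tridiagH_le hσ i j).trans ?_
  rw [sum_add_distrib]
  by_cases hi : (i : ℕ) = 0
  · simp only [hi, if_true, sum_const_zero, zero_add]
    exact sum_ite_val_eq_le _ zero_le_one
  · simp only [hi, if_false]
    linarith [sum_ite_val_eq_le (N := N) (i - 1) (a := 1/2) (by norm_num),
      sum_ite_val_eq_le (N := N) (i + 1) (a := 1/2) (by norm_num)]

theorem abs_mulVec_apply_le {n : Type*} [Fintype n] (A : Matrix n n ℝ) (v : n → ℝ) (i : n) :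
    |(A *ᵥ v) i| ≤ ∑ j, |A i j| * |v j| := by
  simpa only [mulVec, dotProduct, abs_mul] using abs_sum_le_sum_abs (fun j => A i j * v j) univ

theorem abs_mulVec_le {n : Type*} [Fintype n] {A : Matrix n n ℝ} (hA : ∀ i, ∑ j, |A i j| ≤ 1)
    {v : n → ℝ} {B : ℝ} (hv : ∀ i, |v i| ≤ B) (i : n) : |(A *ᵥ v) i| ≤ B :=
  calc |(A *ᵥ v) i| ≤ ∑ j, |A i j| * |v j| := abs_mulVec_apply_le A v i
    _ ≤ ∑ j, |A i j| * B := by gcongr with j; exact hv j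
    _ ≤ B := by
        rw [← sum_mul]
        exact mul_le_of_le_one_left ((abs_nonneg _).trans (hv i)) (hA i)

theorem abs_pow_mulVec_le {n : Type*} [Fintype n] [DecidableEq n] {A : Matrix n n ℝ}
    (hA : ∀ i, ∑ j, |A i j| ≤ 1) {v : n → ℝ} {B : ℝ} (hv : ∀ i, |v i| ≤ B) (k : ℕ) (i : n) :
    |(A ^ k *ᵥ v) i| ≤ B := by
  induction k generalizing i with
  | zero => simpa using hv i
  | succ k ih => rw [pow_succ', ← mulVec_mulVec]; exact abs_mulVec_le hA ih i

theorem mulVec_unitVec {N j : ℕ} (A : Matrix (Fin N) (Fin N) ℝ) (hj : j < N) :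
    A *ᵥ unitVec N j = A.col ⟨j, hj⟩ := by
  have : unitVec N j = Pi.single ⟨j, hj⟩ 1 := by
    ext i; simp [unitVec, Pi.single_apply, Fin.ext_iff]
  rw [this, mulVec_single_one]

theorem tridiagH_mulVec_unitVec_zero {N : ℕ} (σ : ℝ) (hN : 0 < N) :
    tridiagH N σ *ᵥ unitVec N 0 = (1/2 : ℝ) • unitVec N 1 := by
  rw [mulVec_unitVec _ hN]
  ext i
  simp only [col_apply, tridiagH, unitVec, Pi.smul_apply, smul_eq_mul]
  split_ifs <;> simp_all

theorem two_smul_tridiagH_mulVec_unitVec_succ {N j : ℕ} (σ : ℝ) (hj : j + 1 < N) :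
    (2 : ℝ) • (tridiagH N σ *ᵥ unitVec N (j + 1))
      = ((if j = 0 then 2 else 1) * σ) • unitVec N j + unitVec N (j + 2) := by
  rw [mulVec_unitVec _ hj]
  ext i
  simp only [col_apply, tridiagH, unitVec, Pi.smul_apply, Pi.add_apply, smul_eq_mul]
  split_ifs <;> first | omega | ring

theorem krylov_mulVec_coeff {N : ℕ} (H : Matrix (Fin N) (Fin N) ℝ) {p : ℝ[X]}
    (hp : p.natDegree < N) : krylov H *ᵥ (fun i => p.coeff i) = aeval H p *ᵥ e1 N := by
  ext i
  rw [aeval_eq_sum_range' hp, sum_mulVec, Finset.sum_apply,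
    ← Fin.sum_univ_eq_sum_range (fun m => ((p.coeff m • H ^ m) *ᵥ e1 N) i)]
  simp only [smul_mulVec, Pi.smul_apply, smul_eq_mul]
  show ∑ m, krylov H i m * p.coeff m = _
  exact sum_congr rfl fun m _ => mul_comm (krylov H i m) (p.coeff m)

noncomputable def krylovPoly (σ : ℝ) : ℕ → ℝ[X]
  | 0 => C 2
  | 1 => C 2 * X
  | j + 2 => C 2 * X * krylovPoly σ (j + 1) - C σ * krylovPoly σ j

theorem natDegree_krylovPoly_le (σ : ℝ) : ∀ j, (krylovPoly σ j).natDegree ≤ j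
  | 0 => by simp [krylovPoly]
  | 1 => by simp [krylovPoly]
  | j + 2 => by
    rw [krylovPoly]
    refine (natDegree_sub_le _ _).trans (max_le ?_ ?_)
    · exact natDegree_mul_le_of_le (by compute_degree) (natDegree_krylovPoly_le σ (j + 1)) |>.trans
        (by omega)
    · exact natDegree_C_mul_le _ _ |>.trans ((natDegree_krylovPoly_le σ j).trans (by omega))

theorem one_add_sqrt_two_sq : (1 + √2) ^ 2 = 2 * (1 + √2) + 1 := by
  nlinarith [Real.sq_sqrt (zero_le_two : (0 : ℝ) ≤ 2)]

theorem abs_coeff_krylovPoly_le {σ : ℝ} (hσ : |σ| ≤ 1) :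
    ∀ j i, |(krylovPoly σ j).coeff i| ≤ 2 * (1 + √2) ^ j
  | 0, i => by
    rw [krylovPoly, coeff_C, pow_zero, mul_one]
    split_ifs <;> norm_num
  | 1, i => by
    have h2 : (1 : ℝ) ≤ √2 := Real.one_le_sqrt.mpr one_le_two
    rw [krylovPoly, coeff_C_mul, coeff_X]
    split_ifs <;> norm_num; linarith
  | j + 2, i => by
    have ih₁ := abs_coeff_krylovPoly_le hσ (j + 1)
    have ih₀ := abs_coeff_krylovPoly_le hσ j i
    have hX : |(X * krylovPoly σ (j + 1)).coeff i| ≤ 2 * (1 + √2) ^ (j + 1) := by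
      rcases i with _ | i
      · simp only [coeff_X_mul_zero, abs_zero]; positivity
      · simpa [coeff_X_mul] using ih₁ i
    calc |(krylovPoly σ (j + 2)).coeff i|
        = |2 * (X * krylovPoly σ (j + 1)).coeff i - σ * (krylovPoly σ j).coeff i| := by
          simp only [krylovPoly, mul_assoc, coeff_sub, coeff_C_mul]
      _ ≤ 2 * |(X * krylovPoly σ (j + 1)).coeff i| + |(krylovPoly σ j).coeff i| := by
          refine (abs_sub _ _).trans ?_
          rw [abs_mul, abs_mul, abs_two]
          gcongr
          exact mul_le_of_le_one_left (abs_nonneg _) hσ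
      _ ≤ 2 * (2 * (1 + √2) ^ (j + 1)) + 2 * (1 + √2) ^ j := by gcongr
      _ = 2 * (1 + √2) ^ (j + 2) := by
          rw [pow_add _ j 2, one_add_sqrt_two_sq]; ring

theorem e1_eq_unitVec_zero (N : ℕ) : e1 N = unitVec N 0 := rfl

theorem aeval_krylovPoly_mulVec_e1 {N : ℕ} (σ : ℝ) :
    ∀ j, j < N → aeval (tridiagH N σ) (krylovPoly σ j) *ᵥ e1 N
      = (if j = 0 then 2 else 1 : ℝ) • unitVec N j
  | 0, _ => by
    simp [krylovPoly, Algebra.algebraMap_eq_smul_one, smul_mulVec, e1_eq_unitVec_zero]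
  | 1, hN => by
    simp only [krylovPoly, map_mul, aeval_C, aeval_X, ← Algebra.smul_def, smul_mulVec,
      e1_eq_unitVec_zero, tridiagH_mulVec_unitVec_zero σ (by omega : 0 < N), smul_smul]
    norm_num
  | j + 2, hj => by
    have ih₁ := aeval_krylovPoly_mulVec_e1 (N := N) σ (j + 1) (by omega)
    have ih₀ := aeval_krylovPoly_mulVec_e1 (N := N) σ j (by omega)
    simp only [krylovPoly, map_sub, map_mul, aeval_C, aeval_X, ← Algebra.smul_def, mul_assoc,
      sub_mulVec, smul_mulVec, ← mulVec_mulVec, ih₁, ih₀, Nat.add_one_ne_zero, if_false, one_smul,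
      two_smul_tridiagH_mulVec_unitVec_succ σ (by omega : j + 1 < N)]
    module

noncomputable def krylovInv (N : ℕ) (σ : ℝ) : Matrix (Fin N) (Fin N) ℝ :=
  of fun i j => (krylovPoly σ j).coeff i / (if (j : ℕ) = 0 then 2 else 1)

theorem krylov_mul_krylovInv (N : ℕ) (σ : ℝ) : krylov (tridiagH N σ) * krylovInv N σ = 1 := by
  ext i j
  have hcol : krylov (tridiagH N σ) *ᵥ (krylovInv N σ).col j = unitVec N j := by
    have hc : (if (j : ℕ) = 0 then 2 else 1 : ℝ) ≠ 0 := by split_ifs <;> norm_num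
    have hPj : (krylovInv N σ).col j
        = (if (j : ℕ) = 0 then 2 else 1 : ℝ)⁻¹ • fun i : Fin N => (krylovPoly σ j).coeff i := by
      ext i; simp [krylovInv, div_eq_inv_mul]
    rw [hPj, mulVec_smul, krylov_mulVec_coeff _ ((natDegree_krylovPoly_le σ j).trans_lt j.isLt),
      aeval_krylovPoly_mulVec_e1 σ j j.isLt, smul_smul, inv_mul_cancel₀ hc, one_smul]
  simpa [mulVec, dotProduct, mul_apply, one_apply, unitVec, Fin.ext_iff] using congrFun hcol i

theorem sum_range_pow_le_pow {r : ℝ} (hr : 2 ≤ r) (n : ℕ) : ∑ m ∈ range n, r ^ m ≤ r ^ n := by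
  induction n with
  | zero => simp
  | succ n ih =>
    rw [sum_range_succ, pow_succ]
    nlinarith [pow_nonneg (zero_le_two.trans hr) n]

theorem abs_krylovInv_mulVec_le {N : ℕ} {σ : ℝ} (hσ : |σ| ≤ 1) {v : Fin N → ℝ}
    (hv : ∀ i, |v i| ≤ 1) (i : Fin N) : |(krylovInv N σ *ᵥ v) i| ≤ 2 * (1 + √2) ^ N := by
  have habs : ∀ m : Fin N, |krylovInv N σ i m| ≤ 2 * (1 + √2) ^ (m : ℕ) := fun m => by
    have hc : (1 : ℝ) ≤ |if (m : ℕ) = 0 then 2 else 1| := by split_ifs <;> norm_num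
    rw [krylovInv, of_apply, abs_div]
    exact (div_le_self (abs_nonneg _) hc).trans (abs_coeff_krylovPoly_le hσ m i)
  calc |(krylovInv N σ *ᵥ v) i| ≤ ∑ m, |krylovInv N σ i m| * |v m| := abs_mulVec_apply_le _ v i
    _ ≤ ∑ m : Fin N, 2 * (1 + √2) ^ (m : ℕ) :=
        sum_le_sum fun m _ => (mul_le_of_le_one_right (abs_nonneg _) (hv m)).trans (habs m)
    _ = 2 * ∑ m ∈ range N, (1 + √2) ^ m := by
        rw [mul_sum, Fin.sum_univ_eq_sum_range (fun m => 2 * (1 + √2) ^ m)]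
    _ ≤ 2 * (1 + √2) ^ N := by
        gcongr
        exact sum_range_pow_le_pow (by linarith [Real.one_le_sqrt.mpr one_le_two]) N

theorem enorm'_le_sqrt_mul {N : ℕ} {v : Fin N → ℝ} {B : ℝ} (hB : 0 ≤ B) (hv : ∀ i, |v i| ≤ B) :
    enorm' v ≤ √N * B := by
  rw [enorm', EuclideanSpace.norm_eq, ← Real.sqrt_sq hB, ← Real.sqrt_mul (Nat.cast_nonneg N)]
  gcongr
  calc ∑ i, ‖v i‖ ^ 2 ≤ ∑ _i : Fin N, B ^ 2 := by
        gcongr with i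
        simpa only [Real.norm_eq_abs] using hv i
    _ = N * B ^ 2 := by simp

theorem krylov_inverse_power_bound_general (N : ℕ)
    (H : Matrix (Fin N) (Fin N) ℝ) (hH : H = besselH N ∨ H = modBesselH N) :
    IsUnit (krylov H) ∧
    ∀ k : ℕ, N ≤ k →
      enorm' ((krylov H)⁻¹.mulVec ((H ^ k).mulVec (e1 N))) ≤
        2 * Real.sqrt N * (1 + Real.sqrt 2) ^ N := by
  obtain ⟨σ, hσ, rfl⟩ : ∃ σ : ℝ, |σ| ≤ 1 ∧ H = tridiagH N σ := by
    rcases hH with rfl | rfl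
    exacts [⟨-1, by norm_num, besselH_eq_tridiagH N⟩, ⟨1, by norm_num, modBesselH_eq_tridiagH N⟩]
  have hK := krylov_mul_krylovInv N σ
  refine ⟨(isUnit_iff_isUnit_det _).mpr (isUnit_det_of_right_inverse hK), fun k _ => ?_⟩
  have he1 : ∀ i, |e1 N i| ≤ 1 := fun i => by unfold e1; split_ifs <;> norm_num
  rw [inv_eq_right_inv hK, mul_comm 2 √N, mul_assoc]
  exact enorm'_le_sqrt_mul (by positivity) <| abs_krylovInv_mulVec_le hσ <|
    abs_pow_mulVec_le (sum_abs_tridiagH_le hσ) he1 k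

/-- If `H_N` is the Bessel or the modified Bessel Hessenberg matrix, then the Krylov matrix
`K_N(H_N, e₁)` is invertible and for every `k ≥ N`,
`‖K_N(H_N, e₁)⁻¹ H_N^k e₁‖ ≤ 2 √N (1 + √2)^N`. -/
theorem krylov_inverse_power_bound (N : ℕ) (hN : 1 ≤ N)
    (H : Matrix (Fin N) (Fin N) ℝ) (hH : H = besselH N ∨ H = modBesselH N) :
    IsUnit (krylov H) ∧
    ∀ k : ℕ, N ≤ k →
      enorm' ((krylov H)⁻¹.mulVec ((H ^ k).mulVec (e1 N))) ≤
        2 * Real.sqrt N * (1 + Real.sqrt 2) ^ N :=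
  krylov_inverse_power_bound_general N H hH
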